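/- arXiv:1005.1594 — 2 statements merged into one kernel-verified Lean document; each statement's English description precedes it below -/
import Mathlib

section
/- Let δ_k(b) = Σ_{i=1}^{m_k} min{b/k, 2i-1+n_k-m_k}, where m_k = min(K,k) and n_k = max(K,k). Then each δ_k is nondecreasing in b, δ_1(b) = min{b, K}, and for every b > 0 and every 1 ≤ k ≤ K one has δ_k(b) ≥ δ_1(b) = min{b, K}. Consequently min_{1≤k≤K} δ_k(b) = min{b, K}. -/
/-- The informed-transmitter exponent bound for the `K`-user MAC with `N_t = 1`, `M = K`. -/
noncomputable def deltaIT (K k : ℕ) (b : ℝ) : ℝ :=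
  ∑ i ∈ Finset.range (min K k),
    min (b / (k : ℝ)) (2 * (i : ℝ) + 1 + ((max K k : ℕ) : ℝ) - ((min K k : ℕ) : ℝ))

/-- each `δ_k` is nondecreasing in `b`, `δ_1(b) = min{b,K}`, for every `b > 0`
and `1 ≤ k ≤ K` one has `δ_k(b) ≥ δ_1(b) = min{b,K}`, and hence
`min_{1 ≤ k ≤ K} δ_k(b) = min{b,K}`. -/
theorem stmt2 (K : ℕ) (hK : 0 < K) :
    (∀ k, 1 ≤ k → k ≤ K → Monotone (fun b : ℝ => deltaIT K k b)) ∧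
    (∀ b : ℝ, deltaIT K 1 b = min b (K : ℝ)) ∧
    (∀ b : ℝ, 0 < b → ∀ k, 1 ≤ k → k ≤ K → min b (K : ℝ) ≤ deltaIT K k b) ∧
    (∀ b : ℝ, 0 < b →
      (Finset.Icc 1 K).inf' (by simp [Finset.nonempty_Icc]; omega)
        (fun k => deltaIT K k b) = min b (K : ℝ)) := by
  have h2 : ∀ b : ℝ, deltaIT K 1 b = min b (K : ℝ) := by
    intro b
    have hm : min K 1 = 1 := min_eq_right hK
    have hM : max K 1 = K := max_eq_left hK
    simp only [deltaIT, hm, hM, Finset.sum_range_one]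
    norm_num
  have h3 : ∀ b : ℝ, 0 < b → ∀ k, 1 ≤ k → k ≤ K → min b (K : ℝ) ≤ deltaIT K k b := by
    intro b hb k h1 h2'
    have hm : min K k = k := min_eq_right h2'
    have hM : max K k = K := max_eq_left h2'
    have hk0 : (0:ℝ) < (k:ℝ) := by exact_mod_cast h1
    have hk1 : (1:ℝ) ≤ (k:ℝ) := by exact_mod_cast h1
    have hkK : (k:ℝ) ≤ (K:ℝ) := by exact_mod_cast h2'
    have key : ∀ i ∈ Finset.range k,
        min b (K:ℝ) / (k:ℝ) ≤ min (b / (k:ℝ)) (2 * (i:ℝ) + 1 + (K:ℝ) - (k:ℝ)) := by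
      intro i _
      have hi0 : (0:ℝ) ≤ (i:ℝ) := Nat.cast_nonneg i
      refine le_min ?_ ?_
      · gcongr
        exact min_le_left _ _
      · rw [div_le_iff₀ hk0]
        have hbK : min b (K:ℝ) ≤ (K:ℝ) := min_le_right _ _
        nlinarith [mul_nonneg hi0 hk0.le,
          mul_nonneg (sub_nonneg.2 hk1) (sub_nonneg.2 hkK)]
    calc min b (K:ℝ) = ∑ _i ∈ Finset.range k, min b (K:ℝ) / (k:ℝ) := by
          rw [Finset.sum_const, Finset.card_range, nsmul_eq_mul]
          field_simp
      _ ≤ _ := by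
          rw [deltaIT, hm, hM]
          exact Finset.sum_le_sum key
  refine ⟨?_, h2, h3, ?_⟩
  · intro k h1 h2' x y hxy
    simp only [deltaIT]
    apply Finset.sum_le_sum
    intro i _
    have hk0 : (0:ℝ) ≤ (k:ℝ) := Nat.cast_nonneg k
    exact min_le_min (by gcongr) le_rfl
  · intro b hb
    refine le_antisymm ?_ ?_
    · have h1mem : 1 ∈ Finset.Icc 1 K := by simp only [Finset.mem_Icc]; omega
      calc (Finset.Icc 1 K).inf' _ (fun k => deltaIT K k b) ≤ deltaIT K 1 b :=
            Finset.inf'_le _ h1mem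
        _ = min b (K:ℝ) := h2 b
    · apply Finset.le_inf'
      intro k hk
      rw [Finset.mem_Icc] at hk
      exact h3 b hb k hk.1 hk.2
end

section
/- Let d*(r) be the piecewise linear interpolation of points (j, (n_t-j)(n_r-j)), j = 0,...,min(n_t,n_r). For each j in {1,...,min(n_t,n_r)} and each b in the interval (d*(j)/j, d*(j-1)/(j-1)] (with d*(0)/0 = +∞), the equation b·r = d*(r) has a unique solution r ∈ [j-1, j], and b·r = b·[j·d*(j-1) - (j-1)·d*(j)] / [b + d*(j-1) - d*(j)]. -/
/-- The Zheng–Tse DMT curve `d*_{n_t,n_r}`: the piecewise linear function interpolating the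
points `(j, (n_t-j)(n_r-j))` for integers `j`. -/
noncomputable def dstar (nt nr : ℕ) (r : ℝ) : ℝ :=
  ((nt : ℝ) - ((⌈r⌉ : ℝ) - 1)) * ((nr : ℝ) - ((⌈r⌉ : ℝ) - 1)) +
    (r - ((⌈r⌉ : ℝ) - 1)) *
      (((nt : ℝ) - (⌈r⌉ : ℝ)) * ((nr : ℝ) - (⌈r⌉ : ℝ)) -
        ((nt : ℝ) - ((⌈r⌉ : ℝ) - 1)) * ((nr : ℝ) - ((⌈r⌉ : ℝ) - 1)))

/-- for `j ∈ {1,…,min(n_t,n_r)}` and `b ∈ (d*(j)/j, d*(j-1)/(j-1)]` (with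
`d*(0)/0 = +∞`, i.e. no upper condition for `j = 1`), the equation `b·r = d*(r)` has a unique
solution `r ∈ [j-1, j]`, and there
`b·r = b·[j·d*(j-1) - (j-1)·d*(j)] / [b + d*(j-1) - d*(j)]`. -/
theorem stmt9 (nt nr : ℕ) (hnt : 0 < nt) (hnr : 0 < nr)
    (j : ℕ) (hj1 : 1 ≤ j) (hj2 : j ≤ min nt nr) (b : ℝ)
    (hb1 : dstar nt nr (j : ℝ) / (j : ℝ) < b)
    (hb2 : j = 1 ∨ b ≤ dstar nt nr ((j : ℝ) - 1) / ((j : ℝ) - 1)) :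
    (∃! r : ℝ, r ∈ Set.Icc ((j : ℝ) - 1) (j : ℝ) ∧ b * r = dstar nt nr r) ∧
    (∀ r ∈ Set.Icc ((j : ℝ) - 1) (j : ℝ), b * r = dstar nt nr r →
      b * r = b * ((j : ℝ) * dstar nt nr ((j : ℝ) - 1) - ((j : ℝ) - 1) * dstar nt nr (j : ℝ)) /
        (b + dstar nt nr ((j : ℝ) - 1) - dstar nt nr (j : ℝ))) := by
  have hj1R : (1:ℝ) ≤ (j:ℝ) := by exact_mod_cast hj1
  have hjnt : (j:ℝ) ≤ (nt:ℝ) := by exact_mod_cast le_trans hj2 (min_le_left _ _)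
  have hjnr : (j:ℝ) ≤ (nr:ℝ) := by exact_mod_cast le_trans hj2 (min_le_right _ _)
  set A : ℝ := ((nt:ℝ) - ((j:ℝ) - 1)) * ((nr:ℝ) - ((j:ℝ) - 1)) with hA
  set B : ℝ := ((nt:ℝ) - (j:ℝ)) * ((nr:ℝ) - (j:ℝ)) with hB
  -- linearity of dstar on [j-1, j]
  have hlin : ∀ r ∈ Set.Icc ((j:ℝ) - 1) (j:ℝ),
      dstar nt nr r = A + (r - ((j:ℝ) - 1)) * (B - A) := by
    intro r hr
    rcases eq_or_lt_of_le hr.1 with h | h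
    · have hc : (⌈(j:ℝ) - 1⌉ : ℝ) = (j:ℝ) - 1 := by
        have h2 : (j:ℝ) - 1 = ((j - 1 : ℤ) : ℝ) := by push_cast; ring
        rw [h2, Int.ceil_intCast]
      rw [← h]
      simp only [dstar, hc, hA, hB]
      ring
    · have hc : (⌈r⌉ : ℝ) = (j:ℝ) := by
        have hcz : ⌈r⌉ = (j : ℤ) := by
          rw [Int.ceil_eq_iff]
          constructor
          · push_cast; linarith
          · push_cast; exact hr.2
        rw [hcz]; push_cast; ring
      simp only [dstar, hc, hA, hB]
      try ring
  have hdjm1 : dstar nt nr ((j:ℝ) - 1) = A := by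
    rw [hlin ((j:ℝ) - 1) ⟨le_rfl, by linarith⟩]; ring
  have hdj : dstar nt nr (j:ℝ) = B := by
    rw [hlin (j:ℝ) ⟨by linarith, le_rfl⟩]; ring
  have hBnn : (0:ℝ) ≤ B := mul_nonneg (by linarith) (by linarith)
  have hb0 : 0 < b := by
    rw [hdj] at hb1
    have : (0:ℝ) ≤ B / (j:ℝ) := div_nonneg hBnn (by linarith)
    linarith
  have hABd : B + 1 ≤ A := by nlinarith
  have hs : (0:ℝ) < b + A - B := by linarith
  have hbB : B < b * (j:ℝ) := by
    rw [hdj] at hb1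
    exact (div_lt_iff₀ (by linarith)).mp hb1
  have hAb : b * ((j:ℝ) - 1) ≤ A := by
    by_cases hj' : j = 1
    · subst hj'
      simp only [Nat.cast_one]
      nlinarith
    · rcases hb2 with h1 | h2
      · exact absurd h1 hj'
      · rw [hdjm1] at h2
        have hjm1 : (0:ℝ) < (j:ℝ) - 1 := by
          have h2j : (2:ℕ) ≤ j := by omega
          have : (2:ℝ) ≤ (j:ℝ) := by exact_mod_cast h2j
          linarith
        exact (le_div_iff₀ hjm1).mp h2
  -- the solution
  set r0 : ℝ := ((j:ℝ) * A - ((j:ℝ) - 1) * B) / (b + A - B) with hr0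
  have heq0 : b * r0 = A + (r0 - ((j:ℝ) - 1)) * (B - A) := by
    rw [hr0]
    field_simp
    ring
  have hmem0 : r0 ∈ Set.Icc ((j:ℝ) - 1) (j:ℝ) := by
    constructor
    · rw [hr0, le_div_iff₀ hs]; nlinarith
    · rw [hr0, div_le_iff₀ hs]; nlinarith
  have huniq : ∀ r ∈ Set.Icc ((j:ℝ) - 1) (j:ℝ), b * r = dstar nt nr r → r = r0 := by
    intro r hr hre
    rw [hlin r hr] at hre
    have hz : (b + A - B) * (r - r0) = 0 := by linear_combination hre - heq0
    rcases mul_eq_zero.mp hz with h | h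
    · exact absurd h hs.ne'
    · linarith
  constructor
  · refine ⟨r0, ⟨hmem0, by rw [hlin r0 hmem0]; exact heq0⟩, ?_⟩
    intro r ⟨hr, hre⟩
    exact huniq r hr hre
  · intro r hr hre
    have hrr0 : r = r0 := huniq r hr hre
    rw [hrr0, hdjm1, hdj, hr0, mul_div_assoc]
end
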